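/- Let w ∈ S_n and suppose u is both special k-superior and special (k−1)-superior to w of degree p. Then u·L_k = v(u,w,k)·L_{k-p}, i.e., u(k) = v(u,w,k)(k−p), where v(u,w,k) is the associated element. Moreover v(u,w,k) = v(u,w,k−1)·π_{k-p} with π_{k-p} = s_{k-1}s_{k-2}⋯s_{k-p}. -/

import Mathlib

open Equiv MvPolynomial
open scoped Classical

/-- Coxeter length of a permutation of `Fin n`: the number of inversions. -/
noncomputable def len {n : ℕ} (w : Equiv.Perm (Fin n)) : ℕ :=
  (Finset.univ.filter (fun p : Fin n × Fin n => p.1 < p.2 ∧ w p.2 < w p.1)).card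

/-- The simple reflection swapping the 0-based positions `a` and `a+1`;
this is the 1-based simple reflection `s_{a+1}`. -/
def sr0 (n : ℕ) (a : ℕ) : Equiv.Perm (Fin n) :=
  if h : a + 1 < n then Equiv.swap ⟨a, Nat.lt_of_succ_lt h⟩ ⟨a + 1, h⟩ else 1

/-- `c[k,m] = s_{k-m+1} ⋯ s_{k-1} s_k` (1-based indices), with `c[k,0] = e`. -/
def cyc (n k m : ℕ) : Equiv.Perm (Fin n) :=
  ((List.range m).map (fun t => sr0 n (k - m + t))).prod

/-- The coordinate weight `L_i` (1-based), i.e. the variable `X (i-1)`. -/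
noncomputable def LL (n : ℕ) (i : ℕ) : MvPolynomial (Fin n) ℚ :=
  if h : i - 1 < n then X ⟨i - 1, h⟩ else 0

/-- The simple root `α_{a+1} = L_{a+1} - L_{a+2}` (0-based `a`). -/
noncomputable def alphaR (n a : ℕ) : MvPolynomial (Fin n) ℚ :=
  if h : a + 1 < n then X ⟨a, Nat.lt_of_succ_lt h⟩ - X ⟨a + 1, h⟩ else 0

/-- The fundamental weight `χ_i = L_1 + ⋯ + L_i` (1-based `i`). -/
noncomputable def chiW (n i : ℕ) : MvPolynomial (Fin n) ℚ :=
  ∑ j ∈ Finset.univ.filter (fun j : Fin n => (j : ℕ) < i), X j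

/-- `∏_{β ∈ Δ₊ ∩ w⁻¹Δ₋} β`, the value `ξ^w(w)`. -/
noncomputable def topVal {n : ℕ} (w : Equiv.Perm (Fin n)) : MvPolynomial (Fin n) ℚ :=
  ∏ p ∈ Finset.univ.filter (fun p : Fin n × Fin n => p.1 < p.2 ∧ w p.2 < w p.1),
    (X p.1 - X p.2)

/-- Bruhat order on the symmetric group. -/
def bruhatLE {n : ℕ} (w v : Equiv.Perm (Fin n)) : Prop :=
  Relation.ReflTransGen
    (fun x y => (∃ i j : Fin n, y = x * Equiv.swap i j) ∧ len y = len x + 1) w v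

/-- The characterization of the family of equivariant Schubert classes `ξ^w : W → S(h*)`:
support condition, value at `w`, and the divided-difference recursion
`𝒜_a ξ^w = ξ^{w s_a}` if `w s_a < w` and `0` otherwise, where
`(𝒜_a f)(v) = (f(v s_a) - f(v))/(v·α_a)`. -/
def IsXi {n : ℕ} (xi : Equiv.Perm (Fin n) → Equiv.Perm (Fin n) → MvPolynomial (Fin n) ℚ) :
    Prop :=
  (∀ w v, ¬ bruhatLE w v → xi w v = 0) ∧
  (∀ w, xi w w = topVal w) ∧
  (∀ w v (a : ℕ), a + 1 < n →
    (len (w * sr0 n a) < len w →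
      xi w (v * sr0 n a) - xi w v = (rename ⇑v (alphaR n a)) * xi (w * sr0 n a) v) ∧
    (len w < len (w * sr0 n a) → xi w (v * sr0 n a) = xi w v))

/-- The permutation `t_{i_1,q} ⋯ t_{i_s,q}` determined by the list `l = [i_1, …, i_s]`
and the index `q`. -/
def cycPerm {n : ℕ} (l : List (Fin n)) (q : Fin n) : Equiv.Perm (Fin n) :=
  (l.map (fun i => Equiv.swap i q)).prod

/-- The data `(l, q)` with `l = [i_1, …, i_s]` defines a cycle `ζ = t_{i_1,q} ⋯ t_{i_s,q}`
such that `wζ` is special `k`-superior to `w` of degree `s` (1-based `k`):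
`i_1, …, i_s ≤ k < q`, `w(q) > w(i_1) > ⋯ > w(i_s)`, and `ℓ(wζ) = ℓ(w) + s`. -/
def IsSpecialCycle {n : ℕ} (w : Equiv.Perm (Fin n)) (k : ℕ) (l : List (Fin n)) (q : Fin n) :
    Prop :=
  l ≠ [] ∧ (q :: l).Nodup ∧ (∀ i ∈ l, (i : ℕ) < k) ∧ k ≤ (q : ℕ) ∧
  (q :: l).Chain' (fun a b => w b < w a) ∧
  len (w * cycPerm l q) = len w + l.length

/-- `u` is special `k`-superior to `w` of degree `p` (1-based `k`):
`u = w ζ₁ ⋯ ζ_r` for pairwise disjoint cycles `ζ_i` as in `IsSpecialCycle`,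
with degrees summing to `p`. -/
def SpecialSuperior {n : ℕ} (w u : Equiv.Perm (Fin n)) (k p : ℕ) : Prop :=
  ∃ L : List (List (Fin n) × Fin n),
    (∀ c ∈ L, IsSpecialCycle w k c.1 c.2) ∧
    L.Pairwise (fun c d => ∀ x ∈ c.2 :: c.1, x ∉ d.2 :: d.1) ∧
    u = w * (L.map (fun c => cycPerm c.1 c.2)).prod ∧
    (L.map (fun c => c.1.length)).sum = p

/-- The set of indices of `u > w`: `𝓘 = {i ≤ k | w⁻¹u(i) ≠ i}` (stored 0-based,
so `i` ranges over 0-based positions `< k`). -/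
noncomputable def idxSet {n : ℕ} (w u : Equiv.Perm (Fin n)) (k : ℕ) : Finset ℕ :=
  (Finset.range k).filter (fun i => ∃ h : i < n, (w⁻¹ * u) ⟨i, h⟩ ≠ ⟨i, h⟩)

/-- The 0-based positions `< k` not in `𝓘`, listed in decreasing order; its `(j-1)`-st
entry is the 0-based version of `r_j`. -/
noncomputable def freeList {n : ℕ} (w u : Equiv.Perm (Fin n)) (k : ℕ) : List ℕ :=
  (((Finset.range k) \ idxSet w u k).sort (· ≤ ·)).reverse

/-- `λ_j = #{i ∈ 𝓘 | i < r_j}` (1-based `j`). -/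
noncomputable def lamFn {n : ℕ} (w u : Equiv.Perm (Fin n)) (k : ℕ) (j : ℕ) : ℕ :=
  ((idxSet w u k).filter (fun i => i < (freeList w u k).getD (j - 1) 0)).card

/-- The associated element `v(u,w,k) = w π₁ π₂ ⋯ π_{k-p}` where
`π_j = s_{λ_{k-p-j+1}+j-1} ⋯ s_{j+1} s_j` (1-based) if `λ_{k-p-j+1} ≠ 0` and `π_j = e`
otherwise. -/
noncomputable def assocElt {n : ℕ} (w u : Equiv.Perm (Fin n)) (k p : ℕ) :
    Equiv.Perm (Fin n) :=
  w * ((List.range (k - p)).map (fun j0 =>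
        ((List.range (lamFn w u k (k - p - j0))).reverse.map
          (fun t => sr0 n (j0 + t))).prod)).prod


section Aux

open scoped Classical

lemma cycPerm_fix {n : ℕ} (l : List (Fin n)) (q x : Fin n) (hx : x ∉ q :: l) :
    cycPerm l q x = x := by
  induction l with
  | nil => simp [cycPerm]
  | cons i l ih =>
    simp only [List.mem_cons, not_or] at hx
    have h1 : cycPerm l q x = x := by
      apply ih; simp only [List.mem_cons, not_or]; tauto
    simp only [cycPerm, List.map_cons, List.prod_cons, Equiv.Perm.mul_apply] at h1 ⊢
    rw [h1, Equiv.swap_apply_of_ne_of_ne hx.2.1 hx.1]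

lemma swap_fix_of_mem {n : ℕ} {l : List (Fin n)} {i q y : Fin n} (hy : y ∈ l)
    (hil : i ∉ l) (hql : q ∉ l) : Equiv.swap i q y = y := by
  apply Equiv.swap_apply_of_ne_of_ne
  · rintro rfl; exact hil hy
  · rintro rfl; exact hql hy

lemma cycPerm_moves {n : ℕ} (l : List (Fin n)) (q : Fin n) (hl : l ≠ [])
    (hnd : (q :: l).Nodup) (x : Fin n) (hx : x ∈ q :: l) :
    cycPerm l q x ∈ q :: l ∧ cycPerm l q x ≠ x := by
  induction l with
  | nil => exact absurd rfl hl
  | cons i l ih =>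
    simp only [List.nodup_cons, List.mem_cons, not_or] at hnd
    obtain ⟨⟨hqi, hql⟩, hil, hndl⟩ := hnd
    have hnd' : (q :: l).Nodup := List.nodup_cons.mpr ⟨hql, hndl⟩
    have hinql : i ∉ q :: l := by
      simp only [List.mem_cons, not_or]; exact ⟨fun h => hqi h.symm, hil⟩
    have key : cycPerm (i :: l) q x = Equiv.swap i q (cycPerm l q x) := by
      simp [cycPerm, Equiv.Perm.mul_apply]
    rcases List.mem_cons.mp hx with hxq | hx'
    · subst hxq
      rcases eq_or_ne l [] with h0 | h0
      · subst h0
        have : cycPerm ([] : List (Fin n)) x x = x := by simp [cycPerm]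
        rw [key, this, Equiv.swap_apply_right]
        exact ⟨by simp, fun h => hqi h.symm⟩
      · obtain ⟨hy1, hy2⟩ := ih h0 hnd' (by simp)
        rw [key]
        rcases List.mem_cons.mp hy1 with hyq | hyl
        · rw [hyq, Equiv.swap_apply_right]
          exact ⟨by simp, fun h => hqi h.symm⟩
        · rw [swap_fix_of_mem hyl hil hql]
          exact ⟨by simp [hyl], hy2⟩
    · rcases List.mem_cons.mp hx' with hxi | hxl
      · subst hxi
        rw [key, cycPerm_fix _ _ _ hinql, Equiv.swap_apply_left]
        exact ⟨by simp, hqi⟩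
      · obtain ⟨hy1, hy2⟩ := ih (by rintro rfl; simp at hxl) hnd' (by simp [hxl])
        rw [key]
        rcases List.mem_cons.mp hy1 with hyq | hyl
        · rw [hyq, Equiv.swap_apply_right]
          refine ⟨by simp, ?_⟩
          rintro rfl; exact hil hxl
        · rw [swap_fix_of_mem hyl hil hql]
          exact ⟨by simp [hyl], hy2⟩

lemma prod_cycPerm_spec {n : ℕ} (L : List (List (Fin n) × Fin n))
    (hc : ∀ c ∈ L, c.1 ≠ [] ∧ (c.2 :: c.1).Nodup)
    (hd : L.Pairwise (fun c d => ∀ x ∈ c.2 :: c.1, x ∉ d.2 :: d.1)) (x : Fin n) :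
    ((∀ c ∈ L, x ∉ c.2 :: c.1) → (L.map (fun c => cycPerm c.1 c.2)).prod x = x) ∧
    (∀ c ∈ L, x ∈ c.2 :: c.1 →
      (L.map (fun c => cycPerm c.1 c.2)).prod x ∈ c.2 :: c.1 ∧
      (L.map (fun c => cycPerm c.1 c.2)).prod x ≠ x) := by
  induction L with
  | nil => simp
  | cons c L ih =>
    have hc' : ∀ d ∈ L, d.1 ≠ [] ∧ (d.2 :: d.1).Nodup := fun d hdm => hc d (by simp [hdm])
    have hd' : L.Pairwise (fun c d => ∀ x ∈ c.2 :: c.1, x ∉ d.2 :: d.1) :=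
      (List.pairwise_cons.mp hd).2
    have hcd : ∀ d ∈ L, ∀ y ∈ c.2 :: c.1, y ∉ d.2 :: d.1 := fun d hdm y hy =>
      (List.pairwise_cons.mp hd).1 d hdm y hy
    obtain ⟨ihfix, ihmove⟩ := ih hc' hd'
    have key : ∀ y : Fin n, (((c :: L).map (fun c => cycPerm c.1 c.2)).prod) y
        = cycPerm c.1 c.2 ((L.map (fun c => cycPerm c.1 c.2)).prod y) := by
      intro y; simp [Equiv.Perm.mul_apply]
    constructor
    · intro hall
      rw [key, ihfix (fun d hdm => hall d (by simp [hdm])),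
        cycPerm_fix _ _ _ (hall c (by simp))]
    · intro d hdm hxd
      rcases List.mem_cons.mp hdm with rfl | hdL
      · have h1 : (L.map (fun c => cycPerm c.1 c.2)).prod x = x :=
          ihfix (fun e he => hcd e he x hxd)
        rw [key, h1]
        exact cycPerm_moves _ _ (hc d (by simp)).1 (hc d (by simp)).2 x hxd
      · obtain ⟨hy1, hy2⟩ := ihmove d hdL hxd
        rw [key]
        have hfix : cycPerm c.1 c.2 ((L.map (fun c => cycPerm c.1 c.2)).prod x)
            = (L.map (fun c => cycPerm c.1 c.2)).prod x := by
          apply cycPerm_fix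
          intro hmem
          exact hcd d hdL _ hmem hy1
        rw [hfix]
        exact ⟨hy1, hy2⟩

lemma idxSet_eq_of_superior {n : ℕ} {w u : Equiv.Perm (Fin n)} {k p : ℕ}
    (h : SpecialSuperior w u k p) :
    ∃ J : List (Fin n), J.Nodup ∧ (∀ x ∈ J, (x : ℕ) < k) ∧ J.length = p ∧
      idxSet w u k = (J.map Fin.val).toFinset := by
  obtain ⟨L, hc, hd, hu, hs⟩ := h
  have hprod : w⁻¹ * u = (L.map (fun c => cycPerm c.1 c.2)).prod := by
    rw [hu]; group
  have hc' : ∀ c ∈ L, c.1 ≠ [] ∧ (c.2 :: c.1).Nodup := fun c hcm =>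
    ⟨(hc c hcm).1, (hc c hcm).2.1⟩
  refine ⟨(L.map Prod.fst).flatten, ?_, ?_, ?_, ?_⟩
  · rw [List.nodup_flatten]
    constructor
    · intro l hl
      simp only [List.mem_map] at hl
      obtain ⟨c, hcm, rfl⟩ := hl
      exact ((hc c hcm).2.1).of_cons
    · rw [List.pairwise_map]
      refine hd.imp ?_
      intro c d hcd
      rw [List.disjoint_left]
      intro a hac had
      exact hcd a (by simp [hac]) (by simp [had])
  · intro x hx
    simp only [List.mem_flatten, List.mem_map] at hx
    obtain ⟨l, ⟨c, hcm, rfl⟩, hxl⟩ := hx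
    exact (hc c hcm).2.2.1 x hxl
  · rw [List.length_flatten]
    rw [← hs]
    congr 1
    simp
  · ext i
    simp only [idxSet, Finset.mem_filter, Finset.mem_range, List.mem_toFinset,
      List.mem_map, List.mem_flatten]
    constructor
    · rintro ⟨hik, hin, hmove⟩
      by_contra hcon
      apply hmove
      rw [hprod]
      apply (prod_cycPerm_spec L hc' hd ⟨i, hin⟩).1
      intro c hcm hmem
      rcases List.mem_cons.mp hmem with heq | hmem'
      · have := (hc c hcm).2.2.2.1
        have hki : k ≤ i := by rw [← heq] at this; simpa using this
        omega
      · exact hcon ⟨⟨i, hin⟩, ⟨c.1, ⟨c, hcm, rfl⟩, hmem'⟩, rfl⟩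
    · rintro ⟨x, ⟨l, ⟨c, hcm, rfl⟩, hxl⟩, rfl⟩
      have hxk : (x : ℕ) < k := (hc c hcm).2.2.1 x hxl
      refine ⟨hxk, x.2, ?_⟩
      have := (prod_cycPerm_spec L hc' hd x).2 c hcm (by simp [hxl])
      rw [hprod]
      simpa using this.2

lemma card_idxSet {n : ℕ} {w u : Equiv.Perm (Fin n)} {k p : ℕ}
    (h : SpecialSuperior w u k p) : (idxSet w u k).card = p := by
  obtain ⟨J, hnd, _, hlen, heq⟩ := idxSet_eq_of_superior h
  rw [heq, List.toFinset_card_of_nodup (hnd.map Fin.val_injective)]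
  rw [List.length_map]; exact hlen

lemma idxSet_subset {n : ℕ} (w u : Equiv.Perm (Fin n)) {k' k : ℕ} (h : k' ≤ k) :
    idxSet w u k' ⊆ idxSet w u k := by
  intro i hi
  simp only [idxSet, Finset.mem_filter, Finset.mem_range] at hi ⊢
  exact ⟨by omega, hi.2⟩

lemma sort_append_max {s : Finset ℕ} {a : ℕ} (h : ∀ b ∈ s, b < a) (ha : a ∉ s) :
    (insert a s).sort (· ≤ ·) = s.sort (· ≤ ·) ++ [a] := by
  have h1 : ((insert a s).sort (· ≤ ·) : Multiset ℕ) = ((a :: s.sort (· ≤ ·) : List ℕ) : Multiset ℕ) := by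
    rw [Finset.sort_eq, Finset.insert_val_of_notMem ha, ← Finset.sort_eq s (· ≤ ·),
      Multiset.cons_coe]
  have h2 : List.Perm ((insert a s).sort (· ≤ ·)) (a :: s.sort (· ≤ ·)) :=
    Multiset.coe_eq_coe.mp h1
  have hperm : List.Perm ((insert a s).sort (· ≤ ·)) (s.sort (· ≤ ·) ++ [a]) :=
    h2.trans (List.perm_append_singleton a _).symm
  have s1 : List.Pairwise (· ≤ ·) ((insert a s).sort (· ≤ ·)) := Finset.pairwise_sort _ _
  have s2 : List.Pairwise (· ≤ ·) (s.sort (· ≤ ·) ++ [a]) := by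
    rw [List.pairwise_append]
    refine ⟨Finset.pairwise_sort _ _, by simp, ?_⟩
    intro x hx y hy
    rw [List.mem_singleton] at hy
    subst hy
    have := h x ((Finset.mem_sort (α := ℕ) (· ≤ ·)).mp hx)
    omega
  exact hperm.eq_of_pairwise' s1 s2

lemma prod_perm_fix {n : ℕ} (l : List (Equiv.Perm (Fin n))) (x : Fin n)
    (h : ∀ f ∈ l, f x = x) : l.prod x = x := by
  induction l with
  | nil => simp
  | cons f l ih =>
    rw [List.prod_cons, Equiv.Perm.mul_apply, ih (fun g hg => h g (by simp [hg])),
      h f (by simp)]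

lemma sr0_fix {n : ℕ} {a : ℕ} {x : Fin n} (h1 : (x : ℕ) ≠ a) (h2 : (x : ℕ) ≠ a + 1) :
    sr0 n a x = x := by
  unfold sr0
  split
  · apply Equiv.swap_apply_of_ne_of_ne
    · exact fun h => h1 (by rw [h])
    · exact fun h => h2 (by rw [h])
  · rfl

lemma climb {n : ℕ} (a m : ℕ) (h : a + m < n) :
    ((List.range m).reverse.map (fun t => sr0 n (a + t))).prod ⟨a, by omega⟩ = ⟨a + m, h⟩ := by
  induction m with
  | zero => simp
  | succ m ih =>
    have hrev : (List.range (m + 1)).reverse = m :: (List.range m).reverse := by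
      rw [List.range_succ]; simp
    rw [hrev, List.map_cons, List.prod_cons, Equiv.Perm.mul_apply,
      ih (by omega)]
    have hlt : a + m + 1 < n := by omega
    unfold sr0
    rw [dif_pos hlt]
    have : (⟨a + m, by omega⟩ : Fin n) = ⟨a + m, Nat.lt_of_succ_lt hlt⟩ := rfl
    rw [this, Equiv.swap_apply_left]
    exact Fin.ext (by simp; omega)

end Aux

theorem stmt17 {n : ℕ} (w u : Equiv.Perm (Fin n)) (k p : ℕ) (kf kpf : Fin n)
    (hkf : (kf : ℕ) = k - 1) (hkpf : (kpf : ℕ) = k - p - 1) (hpk : p < k)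
    (h1 : SpecialSuperior w u k p) (h2 : SpecialSuperior w u (k - 1) p) :
    u kf = assocElt w u k p kpf ∧
    MvPolynomial.rename (⇑u) (LL n k)
      = MvPolynomial.rename (⇑(assocElt w u k p)) (LL n (k - p)) ∧
    assocElt w u k p =
      assocElt w u (k - 1) p * ((List.range p).map (fun t => sr0 n (k - 2 - t))).prod := by
  classical
  have hn1 : k - 1 < n := hkf ▸ kf.isLt
  have hn2 : k - p - 1 < n := hkpf ▸ kpf.isLt
  have hIcard1 : (idxSet w u k).card = p := card_idxSet h1
  have hIcard2 : (idxSet w u (k - 1)).card = p := card_idxSet h2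
  have hsub : idxSet w u (k - 1) ⊆ idxSet w u k := idxSet_subset w u (by omega)
  have hIeq : idxSet w u k = idxSet w u (k - 1) :=
    (Finset.eq_of_subset_of_card_le hsub (by omega)).symm
  have hIlt : ∀ i ∈ idxSet w u k, i < k - 1 := by
    intro i hi
    rw [hIeq] at hi
    exact Finset.mem_range.mp (Finset.mem_filter.mp hi).1
  have hknI : k - 1 ∉ idxSet w u k := fun h => by have := hIlt _ h; omega
  have hfix : (w⁻¹ * u) ⟨k - 1, hn1⟩ = ⟨k - 1, hn1⟩ := by
    by_contra hcon
    apply hknI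
    simp only [idxSet, Finset.mem_filter, Finset.mem_range]
    exact ⟨by omega, hn1, hcon⟩
  have hkf' : kf = ⟨k - 1, hn1⟩ := Fin.ext hkf
  have hkpf' : kpf = ⟨k - p - 1, hn2⟩ := Fin.ext hkpf
  have hufix : u kf = w kf := by
    have : u kf = w ((w⁻¹ * u) kf) := by simp [Equiv.Perm.mul_apply]
    rw [this, hkf', hfix]
  -- freeList relationship
  have hfl : freeList w u k = (k - 1) :: freeList w u (k - 1) := by
    unfold freeList
    rw [← hIeq]
    have hsd : Finset.range k \ idxSet w u k
        = insert (k - 1) (Finset.range (k - 1) \ idxSet w u k) := by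
      ext i
      simp only [Finset.mem_sdiff, Finset.mem_insert, Finset.mem_range]
      constructor
      · rintro ⟨hik, hiI⟩
        by_cases h : i = k - 1
        · exact Or.inl h
        · exact Or.inr ⟨by omega, hiI⟩
      · rintro (rfl | ⟨h, hiI⟩)
        · exact ⟨by omega, hknI⟩
        · exact ⟨by omega, hiI⟩
    rw [hsd, sort_append_max (fun b hb => Finset.mem_range.mp (Finset.mem_sdiff.mp hb).1)
      (by intro h; have := Finset.mem_range.mp (Finset.mem_sdiff.mp h).1; omega)]
    simp
  have hlam_le : ∀ j, lamFn w u (k - 1) j ≤ p := by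
    intro j
    calc ((idxSet w u (k - 1)).filter _).card ≤ (idxSet w u (k - 1)).card :=
          Finset.card_filter_le _ _
      _ = p := hIcard2
  have hlam1 : lamFn w u k 1 = p := by
    unfold lamFn
    rw [hfl]
    simp only [Nat.sub_self, List.getD_cons_zero]
    rw [Finset.filter_eq_self.mpr hIlt, hIcard1]
  have hlamj : ∀ j : ℕ, lamFn w u k (j + 2) = lamFn w u (k - 1) (j + 1) := by
    intro j
    unfold lamFn
    rw [hIeq, hfl]
    simp [List.getD_cons_succ]
  -- the product splitting
  have hsplit : (List.range (k - p)).map (fun j0 =>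
        ((List.range (lamFn w u k (k - p - j0))).reverse.map
          (fun t => sr0 n (j0 + t))).prod)
      = ((List.range (k - p - 1)).map (fun j0 =>
        ((List.range (lamFn w u k (k - p - j0))).reverse.map
          (fun t => sr0 n (j0 + t))).prod))
        ++ [((List.range (lamFn w u k (k - p - (k - p - 1)))).reverse.map
          (fun t => sr0 n ((k - p - 1) + t))).prod] := by
    rw [show k - p = (k - p - 1) + 1 by omega, List.range_succ, List.map_append]
    simp
  have hagree : ∀ j0 ∈ List.range (k - p - 1),
      ((List.range (lamFn w u k (k - p - j0))).reverse.map
          (fun t => sr0 n (j0 + t))).prod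
      = ((List.range (lamFn w u (k - 1) (k - p - 1 - j0))).reverse.map
          (fun t => sr0 n (j0 + t))).prod := by
    intro j0 hj0
    rw [List.mem_range] at hj0
    have h1 : k - p - j0 = (k - p - j0 - 2) + 2 := by omega
    have h2 : k - p - 1 - j0 = (k - p - j0 - 2) + 1 := by omega
    rw [h1, h2, hlamj]
  have hlist : (List.range p).reverse.map (fun t => sr0 n (k - p - 1 + t))
      = (List.range p).map (fun t => sr0 n (k - 2 - t)) := by
    apply List.ext_getElem
    · simp
    · intro i ha hb
      simp only [List.getElem_map, List.getElem_reverse, List.getElem_range,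
        List.length_map, List.length_reverse, List.length_range] at ha hb ⊢
      congr 1
      omega
  have hlast : ((List.range (lamFn w u k (k - p - (k - p - 1)))).reverse.map
          (fun t => sr0 n ((k - p - 1) + t))).prod
      = ((List.range p).map (fun t => sr0 n (k - 2 - t))).prod := by
    rw [show k - p - (k - p - 1) = 1 by omega, hlam1]
    exact congrArg List.prod hlist
  have hthird : assocElt w u k p
      = assocElt w u (k - 1) p * ((List.range p).map (fun t => sr0 n (k - 2 - t))).prod := by
    unfold assocElt
    rw [hsplit, List.prod_append, List.prod_singleton, hlast, ← mul_assoc,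
      show k - 1 - p = k - p - 1 by omega]
    congr 2
    exact congrArg List.prod (List.map_congr_left hagree)
  -- evaluation
  have hsigma : ((List.range p).map (fun t => sr0 n (k - 2 - t))).prod ⟨k - p - 1, hn2⟩
      = ⟨k - 1, hn1⟩ := by
    rw [← hlist]
    have hc := climb (n := n) (k - p - 1) p (by omega)
    exact hc.trans (Fin.ext (by simp; omega))
  have hQfix : ((List.range (k - 1 - p)).map (fun j0 =>
        ((List.range (lamFn w u (k - 1) (k - 1 - p - j0))).reverse.map
          (fun t => sr0 n (j0 + t))).prod)).prod ⟨k - 1, hn1⟩ = ⟨k - 1, hn1⟩ := by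
    apply prod_perm_fix
    intro f hf
    rw [List.mem_map] at hf
    obtain ⟨j0, hj0, rfl⟩ := hf
    rw [List.mem_range] at hj0
    apply prod_perm_fix
    intro g hg
    rw [List.mem_map] at hg
    obtain ⟨t, ht, rfl⟩ := hg
    rw [List.mem_reverse, List.mem_range] at ht
    have hle := hlam_le (k - 1 - p - j0)
    apply sr0_fix <;> simp <;> omega
  have hmain : assocElt w u k p kpf = u kf := by
    rw [hthird, hkpf', Equiv.Perm.mul_apply, hsigma]
    unfold assocElt
    rw [Equiv.Perm.mul_apply, hQfix, hufix, hkf']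
  refine ⟨hmain.symm, ?_, hthird⟩
  have hLLk : LL n k = X (⟨k - 1, hn1⟩ : Fin n) := by
    unfold LL; rw [dif_pos hn1]
  have hLLkp : LL n (k - p) = X (⟨k - p - 1, hn2⟩ : Fin n) := by
    unfold LL
    rw [show k - p - 1 = (k - p) - 1 from rfl] at hn2
    rw [dif_pos hn2]
  rw [hLLk, hLLkp, rename_X, rename_X, ← hkf', ← hkpf', hmain]
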